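/- arXiv:1311.0142 — 3 statements merged into one kernel-verified Lean document; each statement's English description precedes it below -/
import Mathlib

section
/- The set E₁ of all f ∈ A(D) such that both 2π-periodic functions θ ↦ Re f(e^{iθ}) and θ ↦ Im f(e^{iθ}) are differentiable at no point θ ∈ ℝ is residual in A(D), i.e. it contains a subset that is a countable intersection of open sets and is dense in A(D). -/
open Complex Metric Set Filter

noncomputable def discAlgebra : Set C(Metric.closedBall (0:ℂ) 1, ℂ) :=
  {f | ∃ F : ℂ → ℂ, (∀ z : Metric.closedBall (0:ℂ) 1, F z = f z) ∧
       DifferentiableOn ℂ F (Metric.ball 0 1)}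

noncomputable def bdry (θ : ℝ) : Metric.closedBall (0:ℂ) 1 :=
  ⟨Complex.exp (θ * Complex.I), by
    simp [Metric.mem_closedBall, Complex.dist_eq, Complex.norm_exp]⟩

instance : CompactSpace (Metric.closedBall (0:ℂ) 1) :=
  isCompact_iff_compactSpace.mp (isCompact_closedBall _ _)

open scoped Classical in
lemma isClosed_discAlgebra : IsClosed discAlgebra := by
  apply IsSeqClosed.isClosed
  intro g f hg hfg
  -- define F as extension by f itself
  set F : ℂ → ℂ := fun z => if hz : z ∈ Metric.closedBall (0:ℂ) 1 then f ⟨z, hz⟩ else 0 with hF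
  refine ⟨F, fun z => by simp only [hF]; rw [dif_pos z.2], ?_⟩
  have hball : Metric.ball (0:ℂ) 1 ⊆ Metric.closedBall (0:ℂ) 1 := Metric.ball_subset_closedBall
  -- uniform convergence of extensions on the ball
  have htu : TendstoUniformly (fun n => (g n : C(Metric.closedBall (0:ℂ) 1, ℂ))) f atTop :=
    ContinuousMap.tendsto_iff_tendstoUniformly.mp hfg
  obtain hGn := fun n => (hg n)
  choose G hGeq hGdiff using hGn
  have key : TendstoLocallyUniformlyOn (fun n => G n) F atTop (Metric.ball 0 1) := by
    apply TendstoUniformlyOn.tendstoLocallyUniformlyOn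
    rw [Metric.tendstoUniformlyOn_iff]
    intro ε hε
    rw [Metric.tendstoUniformly_iff] at htu
    filter_upwards [htu ε hε] with n hn z hz
    have hz' : z ∈ Metric.closedBall (0:ℂ) 1 := hball hz
    have := hn ⟨z, hz'⟩
    rw [hGeq n ⟨z, hz'⟩]
    simp only [hF]
    rw [dif_pos hz']
    exact this
  exact key.differentiableOn (Eventually.of_forall fun n => hGdiff n) Metric.isOpen_ball

instance : CompleteSpace ↥discAlgebra := isClosed_discAlgebra.completeSpace_coe

lemma continuous_bdry : Continuous bdry :=
  Continuous.subtype_mk (by fun_prop) _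

noncomputable def uu (pr : ℂ → ℝ) (f : ↥discAlgebra) (θ : ℝ) : ℝ :=
  pr ((f : C(Metric.closedBall (0:ℂ) 1, ℂ)) (bdry θ))

def EE (pr : ℂ → ℝ) (n : ℕ) : Set ↥discAlgebra :=
  {f | ∃ θ ∈ Icc (0:ℝ) (2*Real.pi),
      ∀ h ∈ Ioc (0:ℝ) 1, |uu pr f (θ+h) - uu pr f θ| ≤ n * h}

lemma continuous_uu {pr : ℂ → ℝ} (hpr : Continuous pr) :
    Continuous fun p : ↥discAlgebra × ℝ => uu pr p.1 p.2 := by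
  apply hpr.comp
  exact continuous_eval.comp ((continuous_subtype_val.comp continuous_fst).prodMk
    (continuous_bdry.comp continuous_snd))

lemma isClosed_EE {pr : ℂ → ℝ} (hpr : Continuous pr) (n : ℕ) : IsClosed (EE pr n) := by
  apply IsSeqClosed.isClosed
  intro g f hg hfg
  choose θs hθs hbound using hg
  obtain ⟨θ, hθ, φ, hφmono, hφ⟩ := (isCompact_Icc).tendsto_subseq hθs
  refine ⟨θ, hθ, fun h hh => ?_⟩
  have hc := continuous_uu hpr
  have tend : ∀ c : ℝ, Tendsto (fun k => uu pr (g (φ k)) (θs (φ k) + c)) atTop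
      (nhds (uu pr f (θ + c))) := by
    intro c
    have : Tendsto (fun k => ((g (φ k)), θs (φ k) + c)) atTop (nhds (f, θ + c)) :=
      (hfg.comp hφmono.tendsto_atTop).prodMk_nhds
        ((hφ.add tendsto_const_nhds) : Tendsto _ atTop (nhds (θ + c)))
    exact (hc.tendsto _).comp this
  have t1 := tend h
  have t2 : Tendsto (fun k => uu pr (g (φ k)) (θs (φ k))) atTop (nhds (uu pr f θ)) := by
    simpa using tend 0
  exact le_of_tendsto ((t1.sub t2).abs) (Eventually.of_forall fun k => hbound (φ k) h hh)

lemma cos_jump (a : ℝ) : ∃ t : ℝ, a < t ∧ t ≤ a + 2*Real.pi ∧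
    1 ≤ |Real.cos t - Real.cos a| := by
  have h2π : (0:ℝ) < 2*Real.pi := by positivity
  by_cases hca : Real.cos a ≤ 0
  · refine ⟨⌈a/(2*Real.pi)⌉ * (2*Real.pi), ?_, ?_, ?_⟩
    · rcases eq_or_lt_of_le ((div_le_iff₀ h2π).mp (Int.le_ceil (a/(2*Real.pi)))) with h | h
      · exfalso
        have : Real.cos a = 1 := by
          conv_lhs => rw [h]
          exact Real.cos_int_mul_two_pi _
        linarith
      · exact h
    · have := Int.ceil_lt_add_one (a/(2*Real.pi))
      have := (mul_lt_mul_of_pos_right this h2π)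
      rw [add_mul, div_mul_cancel₀ _ (ne_of_gt h2π), one_mul] at this
      linarith
    · rw [Real.cos_int_mul_two_pi]
      rw [_root_.abs_of_nonneg (by linarith)]
      linarith
  · push_neg at hca
    refine ⟨⌈(a - Real.pi)/(2*Real.pi)⌉ * (2*Real.pi) + Real.pi, ?_, ?_, ?_⟩
    · have h1 : a - Real.pi ≤ ⌈(a - Real.pi)/(2*Real.pi)⌉ * (2*Real.pi) :=
        (div_le_iff₀ h2π).mp (Int.le_ceil _)
      rcases eq_or_lt_of_le h1 with h | h
      · exfalso
        have : Real.cos a = -1 := by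
          have : a = ⌈(a - Real.pi)/(2*Real.pi)⌉ * (2*Real.pi) + Real.pi := by linarith
          rw [this, Real.cos_int_mul_two_pi_add_pi]
        linarith
      · linarith
    · have := Int.ceil_lt_add_one ((a - Real.pi)/(2*Real.pi))
      have := (mul_lt_mul_of_pos_right this h2π)
      rw [add_mul, div_mul_cancel₀ _ (ne_of_gt h2π), one_mul] at this
      linarith
    · rw [Real.cos_int_mul_two_pi_add_pi]
      rw [_root_.abs_of_nonpos (by linarith)]
      linarith

set_option maxHeartbeats 1000000 in
lemma dense_compl_EE {pr : ℂ → ℝ} {w : ℂ}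
    (hadd : ∀ x y : ℂ, pr (x + y) = pr x + pr y)
    (hdist : ∀ x y : ℂ, |pr x - pr y| ≤ ‖x - y‖)
    (hw : ∀ (s t : ℝ), pr (↑s * (w * Complex.exp (↑t * Complex.I))) = s * Real.cos t)
    (habsw : ‖w‖ = 1)
    (n : ℕ) : Dense (EE pr n)ᶜ := by
  rw [Metric.dense_iff]
  rintro f ε hε
  obtain ⟨F, hFeq, hFd⟩ := f.2
  -- uniform continuity
  obtain ⟨δ, hδpos, hδ⟩ := ContinuousMap.uniform_continuity (f : C(Metric.closedBall (0:ℂ) 1, ℂ)) (ε/8) (by positivity)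
  set r : ℝ := 1 - min (δ/2) (1/2) with hr
  have hr0 : 0 < r := by
    have := min_le_right (δ/2) (1/2); simp only [hr]; linarith
  have hr1 : r < 1 := by
    have : 0 < min (δ/2) (1/2) := lt_min (by linarith) (by norm_num)
    simp only [hr]; linarith
  have hrδ : 1 - r < δ := by
    have := min_le_left (δ/2) (1/2); simp only [hr]; linarith
  -- the dilated map ρ on the closed ball
  have hmem : ∀ z : Metric.closedBall (0:ℂ) 1, ((r:ℂ) * z.1) ∈ Metric.closedBall (0:ℂ) 1 := by
    intro z
    have hz : ‖z.1‖ ≤ 1 := by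
      have := z.2; rwa [Metric.mem_closedBall, Complex.dist_eq, sub_zero] at this
    rw [Metric.mem_closedBall, Complex.dist_eq, sub_zero, norm_mul, Complex.norm_real, Real.norm_eq_abs,
      _root_.abs_of_nonneg hr0.le]
    nlinarith
  have hρcont : Continuous (fun z : Metric.closedBall (0:ℂ) 1 =>
      (⟨(r:ℂ) * z.1, hmem z⟩ : Metric.closedBall (0:ℂ) 1)) :=
    (continuous_const.mul continuous_subtype_val).subtype_mk _
  set ρ : C(Metric.closedBall (0:ℂ) 1, Metric.closedBall (0:ℂ) 1) :=
    ⟨fun z => ⟨(r:ℂ) * z.1, hmem z⟩, hρcont⟩ with hρ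
  set pc : C(Metric.closedBall (0:ℂ) 1, ℂ) := (f : C(Metric.closedBall (0:ℂ) 1, ℂ)).comp ρ with hpc
  have hpcval : ∀ z : Metric.closedBall (0:ℂ) 1, pc z = F ((r:ℂ) * z.1) := by
    intro z; simp only [hpc, ContinuousMap.comp_apply, hρ, ContinuousMap.coe_mk]
    rw [hFeq ⟨(r:ℂ) * z.1, hmem z⟩]
  -- dist pc f ≤ ε/8
  have hdistpf : dist pc (f : C(Metric.closedBall (0:ℂ) 1, ℂ)) ≤ ε/8 := by
    rw [ContinuousMap.dist_le (by positivity)]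
    intro z
    apply le_of_lt
    apply hδ
    rw [Subtype.dist_eq]
    simp only [hρ, ContinuousMap.comp_apply, ContinuousMap.coe_mk, hpc]
    have hz : ‖z.1‖ ≤ 1 := by
      have := z.2; rwa [Metric.mem_closedBall, Complex.dist_eq, sub_zero] at this
    calc dist ((r:ℂ) * z.1) z.1 = ‖(↑r - 1) * z.1‖ := by
          rw [Complex.dist_eq]; ring_nf
      _ = |r - 1| * ‖z.1‖ := by
          rw [norm_mul, ← Complex.ofReal_one, ← Complex.ofReal_sub, Complex.norm_real, Real.norm_eq_abs]
      _ ≤ (1 - r) * 1 := by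
          rw [_root_.abs_of_nonpos (by linarith)]
          have := mul_le_mul_of_nonneg_left hz (show (0:ℝ) ≤ 1 - r by linarith)
          linarith
      _ < δ := by linarith
  -- pc belongs to the disc algebra
  have hpcmem : pc ∈ discAlgebra := by
    refine ⟨fun z => F ((r:ℂ) * z), fun z => (hpcval z).symm, ?_⟩
    apply DifferentiableOn.comp (t := Metric.ball (0:ℂ) 1) hFd
    · exact (differentiable_const _).mul differentiable_id |>.differentiableOn
    · intro z hz
      rw [Metric.mem_ball, Complex.dist_eq, sub_zero] at hz ⊢
      rw [norm_mul, Complex.norm_real, Real.norm_eq_abs, _root_.abs_of_nonneg hr0.le]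
      nlinarith
  -- bound on the derivative of F on the closed ball of radius r
  have hsub : Metric.closedBall (0:ℂ) r ⊆ Metric.ball (0:ℂ) 1 := by
    intro z hz
    rw [Metric.mem_closedBall] at hz
    rw [Metric.mem_ball]
    linarith
  have hFan : AnalyticOnNhd ℂ F (Metric.ball (0:ℂ) 1) := hFd.analyticOnNhd Metric.isOpen_ball
  have hderivcont : ContinuousOn (deriv F) (Metric.closedBall (0:ℂ) r) :=
    (hFan.deriv.continuousOn).mono hsub
  obtain ⟨C0, hC0⟩ := (isCompact_closedBall (0:ℂ) r).exists_bound_of_continuousOn hderivcont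
  have hC0pos : 0 ≤ C0 := le_trans (norm_nonneg _) (hC0 0 (Metric.mem_closedBall_self hr0.le))
  have hFdiffAt : ∀ x ∈ Metric.closedBall (0:ℂ) r, DifferentiableAt ℂ F x := fun x hx =>
    hFd.differentiableAt (Metric.isOpen_ball.mem_nhds (hsub hx))
  have hlip : ∀ x ∈ Metric.closedBall (0:ℂ) r, ∀ y ∈ Metric.closedBall (0:ℂ) r,
      ‖F y - F x‖ ≤ C0 * ‖y - x‖ := by
    intro x hx y hy
    exact (convex_closedBall _ _).norm_image_sub_le_of_norm_deriv_le hFdiffAt hC0 hx hy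
  -- membership of r e^{iθ}
  have hrmem : ∀ x : ℝ, ((r:ℂ) * Complex.exp (x * Complex.I)) ∈ Metric.closedBall (0:ℂ) r := by
    intro x
    rw [Metric.mem_closedBall, Complex.dist_eq, sub_zero, norm_mul, Complex.norm_real, Real.norm_eq_abs,
      _root_.abs_of_nonneg hr0.le, Complex.norm_exp]
    simp
  -- modulus of continuity of pc on the boundary
  have hLkey : ∀ θ h : ℝ, 0 < h → h ≤ 1 →
      |pr (F ((r:ℂ) * Complex.exp ((↑(θ+h)) * Complex.I))) -
        pr (F ((r:ℂ) * Complex.exp ((θ:ℝ) * Complex.I)))| ≤ (2*C0) * h := by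
    intro θ h h0 h1
    refine le_trans (hdist _ _) ?_
    refine le_trans (hlip _ (hrmem θ) _ (hrmem (θ+h))) ?_
    have key : ‖(r:ℂ) * Complex.exp ((↑(θ+h)) * Complex.I) -
        (r:ℂ) * Complex.exp ((θ:ℝ) * Complex.I)‖ ≤ 2*h := by
      have factor : (r:ℂ) * Complex.exp ((↑(θ+h)) * Complex.I) -
          (r:ℂ) * Complex.exp ((θ:ℝ) * Complex.I)
          = (r:ℂ) * Complex.exp ((θ:ℝ) * Complex.I) * (Complex.exp ((h:ℝ) * Complex.I) - 1) := by
        rw [mul_sub, mul_one]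
        congr 1
        rw [mul_assoc, ← Complex.exp_add]
        push_cast
        ring_nf
      rw [factor, norm_mul, norm_mul, Complex.norm_real, Real.norm_eq_abs, _root_.abs_of_nonneg hr0.le,
        Complex.norm_exp]
      have hexp : ‖Complex.exp ((h:ℝ) * Complex.I) - 1‖ ≤ 2*h := by
        have := Complex.norm_exp_sub_one_le (x := (h:ℝ) * Complex.I) (by
          rw [norm_mul, Complex.norm_real, Real.norm_eq_abs, Complex.norm_I, mul_one, _root_.abs_of_nonneg h0.le]
          exact h1)
        rw [norm_mul, Complex.norm_real, Real.norm_eq_abs, Complex.norm_I, mul_one, _root_.abs_of_nonneg h0.le] at this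
        exact this
      have : Real.exp (((θ:ℝ) * Complex.I).re) = 1 := by simp
      rw [this]
      nlinarith
    nlinarith
  -- choose the frequency m
  have hπ := Real.pi_pos
  have hπ4 := Real.pi_le_four
  obtain ⟨m, hm⟩ := exists_nat_gt (2*Real.pi*((n:ℝ) + 2*C0 + 1)*(4/ε) + 8)
  have hnn : (0:ℝ) ≤ 2*Real.pi*((n:ℝ) + 2*C0 + 1)*(4/ε) := by positivity
  have hm8 : (8:ℝ) ≤ m := by linarith
  have hmpos : (0:ℝ) < m := by linarith
  have hm1 : 2*Real.pi/m ≤ 1 := by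
    rw [div_le_one hmpos]; linarith
  set c := ε/4 with hc
  have hcpos : 0 < c := by positivity
  have hmain : ((n:ℝ) + 2*C0) * (2*Real.pi/m) < c := by
    rw [mul_div_assoc', div_lt_iff₀ hmpos]
    have hkey : c * (2*Real.pi*((n:ℝ) + 2*C0 + 1)*(4/ε)) = 2*Real.pi*((n:ℝ)+2*C0+1) := by
      rw [hc]; field_simp
    nlinarith [mul_lt_mul_of_pos_left hm hcpos]
  -- the wiggled function q
  have hqcont : Continuous fun z : Metric.closedBall (0:ℂ) 1 => pc z + (c:ℂ) * (w * z.1^m) :=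
    pc.continuous.add (continuous_const.mul (continuous_const.mul (continuous_subtype_val.pow m)))
  set qc : C(Metric.closedBall (0:ℂ) 1, ℂ) := ⟨_, hqcont⟩ with hqc
  have hqval : ∀ z : Metric.closedBall (0:ℂ) 1, qc z = pc z + (c:ℂ) * (w * z.1^m) :=
    fun z => rfl
  have hqmem : qc ∈ discAlgebra := by
    refine ⟨fun z => F ((r:ℂ) * z) + (c:ℂ) * (w * z^m), fun z => ?_, ?_⟩
    · rw [hqval z, hpcval z]
    · apply DifferentiableOn.add
      · apply DifferentiableOn.comp (t := Metric.ball (0:ℂ) 1) hFd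
        · exact (differentiable_const _).mul differentiable_id |>.differentiableOn
        · intro z hz
          rw [Metric.mem_ball, Complex.dist_eq, sub_zero] at hz ⊢
          rw [norm_mul, Complex.norm_real, Real.norm_eq_abs, _root_.abs_of_nonneg hr0.le]
          nlinarith
      · exact (((differentiable_const _).mul
          ((differentiable_const _).mul (differentiable_pow m)))).differentiableOn
  -- distance estimates
  have hdqp : dist qc pc ≤ c := by
    rw [ContinuousMap.dist_le hcpos.le]
    intro z
    have hz : ‖z.1‖ ≤ 1 := by
      have := z.2; rwa [Metric.mem_closedBall, Complex.dist_eq, sub_zero] at this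
    rw [hqval z, dist_eq_norm]
    simp only [add_sub_cancel_left]
    rw [norm_mul, norm_mul, Complex.norm_real, Real.norm_eq_abs, norm_pow,
      _root_.abs_of_nonneg hcpos.le, habsw, one_mul]
    calc c * ‖z.1‖ ^ m ≤ c * 1 := by
          apply mul_le_mul_of_nonneg_left _ hcpos.le
          exact pow_le_one₀ (by positivity) hz
      _ = c := mul_one c
  have hdqf : dist qc (f : C(Metric.closedBall (0:ℂ) 1, ℂ)) < ε := by
    calc dist qc (f : C(Metric.closedBall (0:ℂ) 1, ℂ)) ≤ dist qc pc + dist pc _ := dist_triangle _ _ _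
      _ ≤ c + ε/8 := add_le_add hdqp hdistpf
      _ < ε := by rw [hc]; linarith
  refine ⟨⟨qc, hqmem⟩, ?_, ?_⟩
  · rw [Metric.mem_ball, Subtype.dist_eq]
    exact hdqf
  -- q is not in EE pr n
  rintro ⟨θ, hθ, hb⟩
  set a := (m:ℝ)*θ with ha
  obtain ⟨t, hat, ht2, hjump⟩ := cos_jump a
  set h := (t - a)/m with hhdef
  have hh0 : 0 < h := div_pos (by linarith) hmpos
  have hh2 : h ≤ 2*Real.pi/m := by
    rw [hhdef]
    gcongr
    linarith
  have hh1 : h ≤ 1 := le_trans hh2 hm1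
  have hmh : (m:ℝ)*h = t - a := by
    rw [hhdef]; field_simp
  have hval : ∀ x : ℝ, uu pr ⟨qc, hqmem⟩ x
      = pr (F ((r:ℂ) * Complex.exp ((x:ℝ) * Complex.I))) + c * Real.cos ((m:ℝ)*x) := by
    intro x
    show pr (qc (bdry x)) = _
    have h1 : qc (bdry x) = pc (bdry x) + (c:ℂ) * (w * (Complex.exp ((x:ℝ) * Complex.I))^m) := rfl
    rw [h1, hadd]
    congr 1
    · rw [hpcval]
      norm_num [bdry]
    · have hpow : (Complex.exp ((x:ℝ) * Complex.I))^m
          = Complex.exp ((↑((m:ℝ)*x)) * Complex.I) := by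
        rw [← Complex.exp_nat_mul]
        push_cast
        ring_nf
      rw [hpow, ← hw c ((m:ℝ)*x)]
  have hq := hb h ⟨hh0, hh1⟩
  rw [hval, hval] at hq
  have hcosθh : (m:ℝ)*(θ+h) = t := by
    rw [mul_add, hmh, ← ha]; ring
  rw [hcosθh, ← ha] at hq
  -- the contradiction
  set X := pr (F ((r:ℂ) * Complex.exp ((↑(θ+h)) * Complex.I))) with hX
  set Y := pr (F ((r:ℂ) * Complex.exp ((θ:ℝ) * Complex.I))) with hY
  have hXY : |X - Y| ≤ (2*C0) * h := hLkey θ h hh0 hh1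
  have habs1 : c ≤ |c * (Real.cos t - Real.cos a)| := by
    rw [abs_mul, _root_.abs_of_nonneg hcpos.le]
    nlinarith
  have habs2 : |c * (Real.cos t - Real.cos a)|
      ≤ |X + c * Real.cos t - (Y + c * Real.cos a)| + |X - Y| := by
    have : c * (Real.cos t - Real.cos a) = (X + c * Real.cos t - (Y + c * Real.cos a)) - (X - Y) := by
      ring
    rw [this]
    exact abs_sub _ _
  have hfin : c ≤ ((n:ℝ) + 2*C0) * h := by
    have := le_trans habs1 (le_trans habs2 (add_le_add hq hXY))
    nlinarith
  have : ((n:ℝ) + 2*C0) * h ≤ ((n:ℝ) + 2*C0) * (2*Real.pi/m) :=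
    mul_le_mul_of_nonneg_left hh2 (by positivity)
  linarith

lemma uu_periodic (pr : ℂ → ℝ) (f : ↥discAlgebra) :
    Function.Periodic (uu pr f) (2*Real.pi) := by
  intro x
  have hb : bdry (x + 2*Real.pi) = bdry x := by
    apply Subtype.ext
    show Complex.exp _ = Complex.exp _
    push_cast
    rw [add_mul, Complex.exp_add,
      (by push_cast; ring : ((2:ℂ)*(Real.pi:ℂ)) * Complex.I = 2*(Real.pi:ℂ)*Complex.I),
      Complex.exp_two_pi_mul_I, mul_one]
  unfold uu
  rw [hb]

lemma mem_EE_of_differentiable {pr : ℂ → ℝ} (hbd : ∀ z : ℂ, |pr z| ≤ ‖z‖)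
    (f : ↥discAlgebra) (θ₀ : ℝ)
    (hdiff : DifferentiableAt ℝ (fun x : ℝ => uu pr f x) θ₀) : ∃ n : ℕ, f ∈ EE pr n := by
  have hπ := Real.pi_pos
  set u := fun x : ℝ => uu pr f x with hu
  -- global bound
  set M := ‖(f : C(Metric.closedBall (0:ℂ) 1, ℂ))‖ with hM
  have hMb : ∀ x : ℝ, |u x| ≤ M := by
    intro x
    refine le_trans (hbd _) ?_
    exact ContinuousMap.norm_coe_le_norm (f : C(Metric.closedBall (0:ℂ) 1, ℂ)) (bdry x)
  have hM0 : 0 ≤ M := le_trans (abs_nonneg _) (hMb 0)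
  -- local bound from differentiability
  obtain ⟨C, hCpos, hC⟩ := (hdiff.hasFDerivAt.isBigO_sub).exists_pos
  rw [Asymptotics.isBigOWith_iff, Metric.eventually_nhds_iff] at hC
  obtain ⟨δ, hδpos, hδ⟩ := hC
  set δ' := min δ 1 with hδ'
  have hδ'pos : 0 < δ' := lt_min hδpos one_pos
  have hδ'le : δ' ≤ 1 := min_le_right _ _
  set n := ⌈C⌉₊ + ⌈2*M/δ'⌉₊ with hn
  have hnC : C ≤ (n:ℝ) := by
    have h1 := Nat.le_ceil C
    have h2 : (0:ℝ) ≤ (⌈2*M/δ'⌉₊ : ℝ) := Nat.cast_nonneg _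
    rw [hn]
    push_cast
    linarith
  have hnM : 2*M/δ' ≤ (n:ℝ) := by
    have h1 := Nat.le_ceil (2*M/δ')
    have h2 : (0:ℝ) ≤ (⌈C⌉₊ : ℝ) := Nat.cast_nonneg _
    rw [hn]
    push_cast
    linarith
  refine ⟨n, ?_⟩
  -- reduce θ₀ mod 2π
  set k : ℤ := ⌊θ₀/(2*Real.pi)⌋ with hk
  set θ := θ₀ - k * (2*Real.pi) with hθdef
  have hθIcc : θ ∈ Icc (0:ℝ) (2*Real.pi) := by
    constructor
    · exact Int.sub_floor_div_mul_nonneg θ₀ (by positivity)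
    · have := Int.sub_floor_div_mul_lt θ₀ (show (0:ℝ) < 2*Real.pi by positivity)
      linarith
  have hper : ∀ x : ℝ, u (x - k * (2*Real.pi)) = u x := fun x =>
    (uu_periodic pr f).sub_int_mul_eq k
  refine ⟨θ, hθIcc, fun h hh => ?_⟩
  have e1 : θ + h = (θ₀ + h) - k * (2*Real.pi) := by rw [hθdef]; ring
  have e2 : u (θ + h) = u (θ₀ + h) := by rw [e1, hper]
  have e3 : u θ = u θ₀ := by rw [hθdef, hper]
  show |u (θ + h) - u θ| ≤ n * h
  rw [e2, e3]
  rcases lt_or_ge h δ' with hcase | hcase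
  · have hmem : dist (θ₀ + h) θ₀ < δ := by
      rw [Real.dist_eq, add_sub_cancel_left, abs_of_pos hh.1]
      exact lt_of_lt_of_le hcase (min_le_left _ _)
    have := hδ hmem
    rw [Real.norm_eq_abs, Real.norm_eq_abs, add_sub_cancel_left, abs_of_pos hh.1] at this
    calc |u (θ₀ + h) - u θ₀| ≤ C * h := this
      _ ≤ n * h := mul_le_mul_of_nonneg_right hnC hh.1.le
  · have h2M : |u (θ₀ + h) - u θ₀| ≤ 2*M := by
      have := abs_sub (u (θ₀ + h)) (u θ₀)
      calc |u (θ₀ + h) - u θ₀| ≤ |u (θ₀ + h)| + |u θ₀| := abs_sub _ _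
        _ ≤ 2*M := by linarith [hMb (θ₀+h), hMb θ₀]
    calc |u (θ₀ + h) - u θ₀| ≤ 2*M := h2M
      _ = (2*M/δ') * δ' := by field_simp
      _ ≤ (n:ℝ) * h := by
          apply mul_le_mul hnM hcase hδ'pos.le (Nat.cast_nonneg n)

/-- The set `E₁` of `f ∈ A(D)` such that both `θ ↦ Re f(e^{iθ})` and `θ ↦ Im f(e^{iθ})`
are differentiable at no point `θ ∈ ℝ` is residual in `A(D)`: it contains a `Gδ` dense
subset. -/
theorem residual_nowhere_differentiable_re_and_im :
    ∃ S : Set discAlgebra,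
      S ⊆ {f : discAlgebra | ∀ θ : ℝ,
            ¬ DifferentiableAt ℝ (fun x : ℝ => (f.1 (bdry x)).re) θ ∧
            ¬ DifferentiableAt ℝ (fun x : ℝ => (f.1 (bdry x)).im) θ} ∧
      IsGδ S ∧ Dense S := by
  have hre_closed := fun n => isClosed_EE Complex.continuous_re n
  have him_closed := fun n => isClosed_EE Complex.continuous_im n
  have hre_dense : ∀ n, Dense (EE Complex.re n)ᶜ := by
    intro n
    apply dense_compl_EE (w := 1)
    · intro x y; simp
    · intro x y
      simpa [Complex.sub_re] using Complex.abs_re_le_norm (x - y)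
    · intro s t
      rw [one_mul]
      simp [Complex.mul_re, Complex.exp_ofReal_mul_I_re]
    · simp
  have him_dense : ∀ n, Dense (EE Complex.im n)ᶜ := by
    intro n
    apply dense_compl_EE (w := Complex.I)
    · intro x y; simp
    · intro x y
      simpa [Complex.sub_im] using Complex.abs_im_le_norm (x - y)
    · intro s t
      have h1 : (Complex.I * Complex.exp ((t:ℝ) * Complex.I)).im
          = (Complex.exp ((t:ℝ) * Complex.I)).re := by simp [Complex.mul_im]
      simp [Complex.mul_im, h1, Complex.exp_ofReal_mul_I_re]
    · simp
  refine ⟨⋂ n : ℕ, ((EE Complex.re n)ᶜ ∩ (EE Complex.im n)ᶜ), ?_, ?_, ?_⟩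
  · intro f hf θ₀
    rw [mem_iInter] at hf
    constructor
    · intro hd
      obtain ⟨n, hn⟩ := mem_EE_of_differentiable (fun z => Complex.abs_re_le_norm z) f θ₀ hd
      exact (hf n).1 hn
    · intro hd
      obtain ⟨n, hn⟩ := mem_EE_of_differentiable (fun z => Complex.abs_im_le_norm z) f θ₀ hd
      exact (hf n).2 hn
  · exact IsGδ.iInter_of_isOpen fun n =>
      ((hre_closed n).isOpen_compl).inter ((him_closed n).isOpen_compl)
  · apply dense_iInter_of_isOpen
    · exact fun n => ((hre_closed n).isOpen_compl).inter ((him_closed n).isOpen_compl)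
    · exact fun n => (hre_dense n).inter_of_isOpen_left (him_dense n) (hre_closed n).isOpen_compl
end

section
/- For every positive integer n, the set E_n is open in A(D) with the supremum norm topology. -/
open Complex Metric Set Filter

lemma bdry_periodic (x : ℝ) (k : ℤ) : bdry (x + 2 * Real.pi * k) = bdry x := by
  apply Subtype.ext
  show Complex.exp _ = Complex.exp _
  push_cast
  rw [add_mul, Complex.exp_add]
  rw [show ((2:ℂ) * Real.pi * k) * Complex.I = k * (2 * Real.pi * Complex.I) by ring]
  rw [Complex.exp_int_mul_two_pi_mul_I, mul_one]

set_option synthInstance.maxHeartbeats 1000000 in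
set_option maxHeartbeats 1000000 in
/-- For every positive integer `n`, the set `Eₙ = {f ∈ A(D) : Re f|_𝕋 ∈ Dₙ}` is open in
`A(D)` with the supremum norm topology. -/
theorem En_isOpen (n : ℕ) (hn : 0 < n) :
    IsOpen {f : discAlgebra | ∀ θ : ℝ, ∃ y ∈ Set.Ioo θ (θ + 1 / (n : ℝ)),
        |(f.1 (bdry y)).re - (f.1 (bdry θ)).re| > (n : ℝ) * |y - θ|} := by
  haveI : CompactSpace (Metric.closedBall (0:ℂ) 1) :=
    isCompact_iff_compactSpace.mp (isCompact_closedBall 0 1)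
  have key : IsOpen {f : C(Metric.closedBall (0:ℂ) 1, ℂ) |
      ∀ θ : ℝ, ∃ y ∈ Set.Ioo θ (θ + 1 / (n : ℝ)),
        |(f (bdry y)).re - (f (bdry θ)).re| > (n : ℝ) * |y - θ|} := by
    rw [← isClosed_compl_iff]
    apply IsSeqClosed.isClosed
    intro g f hg hgf
    simp only [mem_compl_iff, mem_setOf_eq] at hg ⊢
    push_neg at hg ⊢
    -- choose witnesses
    choose θ hθ using hg
    -- normalize to [0, 2π)
    set π2 : ℝ := 2 * Real.pi with hπ2
    have hπ2pos : 0 < π2 := by positivity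
    set θ' : ℕ → ℝ := fun k => π2 * Int.fract (θ k / π2) with hθ'def
    have hθ'mem : ∀ k, θ' k ∈ Icc 0 π2 := fun k =>
      ⟨mul_nonneg hπ2pos.le (Int.fract_nonneg _), le_of_lt (by
        calc π2 * Int.fract (θ k / π2) < π2 * 1 :=
              (mul_lt_mul_iff_right₀ hπ2pos).2 (Int.fract_lt_one _)
          _ = π2 := mul_one _)⟩
    have hθ'eq : ∀ k, ∃ m : ℤ, θ k = θ' k + π2 * m := by
      intro k
      refine ⟨⌊θ k / π2⌋, ?_⟩
      rw [hθ'def]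
      simp only [Int.fract]
      field_simp
      ring
    -- adjusted hypothesis
    have hθ'prop : ∀ k, ∀ y ∈ Ioo (θ' k) (θ' k + 1 / (n:ℝ)),
        |((g k) (bdry y)).re - ((g k) (bdry (θ' k))).re| ≤ (n : ℝ) * |y - θ' k| := by
      intro k y hy
      obtain ⟨m, hm⟩ := hθ'eq k
      have h1 : y + π2 * m ∈ Ioo (θ k) (θ k + 1 / (n:ℝ)) := by
        rw [hm]
        exact ⟨by linarith [hy.1], by linarith [hy.2]⟩
      have hb1 : bdry (y + π2 * m) = bdry y := bdry_periodic y m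
      have hb2 : bdry (θ k) = bdry (θ' k) := by rw [hm]; exact bdry_periodic (θ' k) m
      have habs : |y + π2 * m - θ k| = |y - θ' k| := by
        rw [hm]; ring_nf
      have := hθ k (y + π2 * m) h1
      rw [hb1, hb2, habs] at this
      exact this
    obtain ⟨θL, hθLmem, φ, hφ, hconv⟩ := isCompact_Icc.tendsto_subseq hθ'mem
    refine ⟨θL, fun y hy => ?_⟩
    have h1 : ∀ᶠ k in atTop, (θ' ∘ φ) k < y := hconv.eventually_lt_const hy.1
    have h2 : ∀ᶠ k in atTop, y < (θ' ∘ φ) k + 1 / (n:ℝ) := by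
      have hlt : y - 1 / (n:ℝ) < θL := by linarith [hy.2]
      filter_upwards [hconv.eventually_const_lt hlt] with k h
      linarith
    have hEv : ∀ᶠ k in atTop,
        |((g (φ k)) (bdry y)).re - ((g (φ k)) (bdry ((θ' ∘ φ) k))).re|
          ≤ (n : ℝ) * |y - (θ' ∘ φ) k| := by
      filter_upwards [h1, h2] with k hk1 hk2
      exact hθ'prop (φ k) y ⟨hk1, hk2⟩
    have hgφ : Tendsto (fun k => g (φ k)) atTop (nhds f) := hgf.comp hφ.tendsto_atTop
    have hbθ : Tendsto (fun k => bdry ((θ' ∘ φ) k)) atTop (nhds (bdry θL)) :=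
      (continuous_bdry.tendsto θL).comp hconv
    have hev1 : Tendsto (fun k => ((g (φ k)) (bdry y)).re) atTop (nhds ((f (bdry y)).re)) :=
      (Complex.continuous_re.tendsto _).comp
        ((ContinuousEval.continuous_eval.tendsto (f, bdry y)).comp
          (hgφ.prodMk_nhds tendsto_const_nhds))
    have hev2 : Tendsto (fun k => ((g (φ k)) (bdry ((θ' ∘ φ) k))).re) atTop
        (nhds ((f (bdry θL)).re)) :=
      (Complex.continuous_re.tendsto _).comp
        ((ContinuousEval.continuous_eval.tendsto (f, bdry θL)).comp (hgφ.prodMk_nhds hbθ))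
    have hL : Tendsto (fun k => |((g (φ k)) (bdry y)).re - ((g (φ k)) (bdry ((θ' ∘ φ) k))).re|)
        atTop (nhds (|(f (bdry y)).re - (f (bdry θL)).re|)) :=
      (_root_.continuous_abs.tendsto _).comp (hev1.sub hev2)
    have hR : Tendsto (fun k => (n : ℝ) * |y - (θ' ∘ φ) k|) atTop
        (nhds ((n : ℝ) * |y - θL|)) :=
      tendsto_const_nhds.mul ((_root_.continuous_abs.tendsto _).comp (tendsto_const_nhds.sub hconv))
    exact le_of_tendsto_of_tendsto hL hR hEv
  exact key.preimage continuous_subtype_val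
end

section
/- For every positive integer n, the set E_n is dense in A(D) with the supremum norm topology. -/
open Complex Metric Set Filter

/-- `t ↦ exp (t * I)` is 1-Lipschitz. -/
lemma exp_I_lip (s t : ℝ) :
    dist (Complex.exp (s * Complex.I)) (Complex.exp (t * Complex.I)) ≤ dist s t := by
  have hd : ∀ u : ℝ, HasDerivAt (fun v : ℝ => Complex.exp (v * Complex.I))
      (Complex.exp (u * Complex.I) * Complex.I) u := by
    intro u
    have := (((hasDerivAt_id ((u:ℝ):ℂ)).mul_const Complex.I).cexp).comp_ofReal
    simpa using this
  have := Convex.norm_image_sub_le_of_norm_hasDerivWithin_le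
    (f := fun v : ℝ => Complex.exp (v * Complex.I))
    (f' := fun u : ℝ => Complex.exp (u * Complex.I) * Complex.I) (C := 1) (s := Set.univ)
    (fun u _ => (hd u).hasDerivWithinAt)
    (fun u _ => by
      rw [norm_mul, Complex.norm_exp, Complex.norm_I]
      simp) convex_univ (Set.mem_univ t) (Set.mem_univ s)
  simpa [dist_eq_norm] using this

/-- In any half-open interval of length `2π` there is a point where `cos` is `1`,
and a point where it is `-1`. -/
lemma exists_cos_one (a : ℝ) : ∃ b ∈ Set.Ioc a (a + 2 * Real.pi), Real.cos b = 1 := by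
  have hπ := Real.pi_pos
  refine ⟨(⌊a / (2 * Real.pi)⌋ + 1) * (2 * Real.pi), ⟨?_, ?_⟩, ?_⟩
  · have h := Int.lt_floor_add_one (a / (2 * Real.pi))
    have := (div_lt_iff₀ (by positivity)).mp h
    push_cast
    linarith
  · have h : (⌊a / (2 * Real.pi)⌋ : ℝ) * (2 * Real.pi) ≤ a := by
      rw [← le_div_iff₀ (by positivity : (0:ℝ) < 2 * Real.pi)]
      exact Int.floor_le _
    push_cast
    linarith
  · push_cast
    exact_mod_cast Real.cos_int_mul_two_pi _

lemma exists_cos_neg_one (a : ℝ) :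
    ∃ b ∈ Set.Ioc a (a + 2 * Real.pi), Real.cos b = -1 := by
  obtain ⟨b, ⟨hb1, hb2⟩, hb3⟩ := exists_cos_one (a - Real.pi)
  refine ⟨b + Real.pi, ⟨by linarith, by linarith⟩, ?_⟩
  rw [Real.cos_add_pi, hb3]

/-- Key oscillation fact: within `(θ, θ + 2π/m]` one finds `y` with
`|cos (m y) - cos (m θ)| ≥ 1`. -/
lemma exists_osc (m : ℕ) (hm : 0 < m) (θ : ℝ) :
    ∃ y ∈ Set.Ioc θ (θ + 2 * Real.pi / m),
      1 ≤ |Real.cos (m * y) - Real.cos (m * θ)| := by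
  have hm' : (0:ℝ) < m := by exact_mod_cast hm
  by_cases hc : Real.cos (m * θ) ≤ 0
  · obtain ⟨b, ⟨hb1, hb2⟩, hb3⟩ := exists_cos_one ((m:ℝ) * θ)
    refine ⟨b / m, ⟨by rw [lt_div_iff₀ hm']; linarith, ?_⟩, ?_⟩
    · rw [div_le_iff₀ hm']; field_simp; linarith
    · rw [mul_div_cancel₀ _ (ne_of_gt hm'), hb3]
      rw [_root_.abs_of_nonneg (by linarith)]; linarith
  · push_neg at hc
    obtain ⟨b, ⟨hb1, hb2⟩, hb3⟩ := exists_cos_neg_one ((m:ℝ) * θ)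
    refine ⟨b / m, ⟨by rw [lt_div_iff₀ hm']; linarith, ?_⟩, ?_⟩
    · rw [div_le_iff₀ hm']; field_simp; linarith
    · rw [mul_div_cancel₀ _ (ne_of_gt hm'), hb3]
      rw [_root_.abs_of_nonpos (by linarith)]; linarith

/-- For every positive integer `n`, the set `Eₙ = {f ∈ A(D) : Re f|_𝕋 ∈ Dₙ}` is dense in
`A(D)` with the supremum norm topology. -/
theorem En_dense (n : ℕ) (hn : 0 < n) :
    Dense {f : discAlgebra | ∀ θ : ℝ, ∃ y ∈ Set.Ioo θ (θ + 1 / (n : ℝ)),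
        |(f.1 (bdry y)).re - (f.1 (bdry θ)).re| > (n : ℝ) * |y - θ|} := by
  haveI : CompactSpace (Metric.closedBall (0:ℂ) 1) :=
    isCompact_iff_compactSpace.mp (isCompact_closedBall 0 1)
  have main : ∀ (f : ↥discAlgebra) (ε : ℝ), 0 < ε →
      ∃ g : ↥discAlgebra, (∀ θ : ℝ, ∃ y ∈ Set.Ioo θ (θ + 1 / (n : ℝ)),
        |(g.1 (bdry y)).re - (g.1 (bdry θ)).re| > (n : ℝ) * |y - θ|) ∧
        dist (g : C(Metric.closedBall (0:ℂ) 1, ℂ)) (f : C(Metric.closedBall (0:ℂ) 1, ℂ)) < ε := by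
    intro f ε hε
    have hπ := Real.pi_pos
    have hn' : (0:ℝ) < n := by exact_mod_cast hn
    -- uniform continuity of f
    have hu : UniformContinuous (f.1 : C(Metric.closedBall (0:ℂ) 1, ℂ)) :=
      CompactSpace.uniformContinuous_of_continuous f.1.continuous
    rw [Metric.uniformContinuous_iff] at hu
    obtain ⟨δ', hδ', hmod⟩ := hu (ε / 8) (by positivity)
    -- choose the frequency m
    obtain ⟨m, hm⟩ := exists_nat_gt (max (2 * Real.pi / δ')
      (max ((n:ℝ) * 2 * Real.pi / (ε / 8)) (2 * Real.pi * n)))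
    have hm1 : 2 * Real.pi / δ' < m := lt_of_le_of_lt (le_max_left _ _) hm
    have hm2 : (n:ℝ) * 2 * Real.pi / (ε / 8) < m :=
      lt_of_le_of_lt ((le_max_left _ _).trans (le_max_right _ _)) hm
    have hm3 : 2 * Real.pi * n < m :=
      lt_of_le_of_lt ((le_max_right _ _).trans (le_max_right _ _)) hm
    have hm0 : 0 < m := by
      by_contra h
      push_neg at h
      interval_cases m
      · simp at hm3; nlinarith
    have hm0' : (0:ℝ) < m := by exact_mod_cast hm0
    -- bounds derived from the choice of m
    have hb1 : 2 * Real.pi / m < δ' := by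
      rw [div_lt_iff₀ hm0']
      rw [div_lt_iff₀ hδ'] at hm1
      linarith
    have hb2 : (n:ℝ) * (2 * Real.pi / m) < ε / 8 := by
      rw [div_lt_iff₀ (by positivity : (0:ℝ) < ε / 8)] at hm2
      rw [mul_div_assoc'] at *
      rw [div_lt_iff₀ hm0']
      nlinarith
    have hb3 : 2 * Real.pi / m < 1 / n := by
      rw [div_lt_div_iff₀ hm0' hn']
      nlinarith
    -- the perturbed function
    set c : ℝ := ε / 4 with hc
    have hcpos : 0 < c := by positivity
    set g : C(Metric.closedBall (0:ℂ) 1, ℂ) :=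
      ⟨fun z => f.1 z + (c:ℂ) * (z:ℂ) ^ m, by
        refine f.1.continuous.add ?_
        exact (continuous_const.mul ((continuous_subtype_val).pow m))⟩ with hg
    have hgmem : g ∈ discAlgebra := by
      obtain ⟨F, hF, hFd⟩ := f.2
      refine ⟨fun z => F z + (c:ℂ) * z ^ m, fun z => by simp [hg, hF z], ?_⟩
      exact hFd.add ((differentiable_const _).mul (differentiable_pow m)).differentiableOn
    refine ⟨⟨g, hgmem⟩, ?_, ?_⟩
    swap
    · -- distance estimate
      rw [ContinuousMap.dist_lt_iff hε]
      intro z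
      have hz : ‖(z:ℂ)‖ ≤ 1 := by
        have h := mem_closedBall_zero_iff.mp z.2
        simpa using h
      have hsub' : g z - f.1 z = (c:ℂ) * (z:ℂ) ^ m := by
        show (f.1 z + (c:ℂ) * (z:ℂ) ^ m) - f.1 z = _
        ring
      have : dist (g z) (f.1 z) = c * ‖(z:ℂ) ^ m‖ := by
        rw [Complex.dist_eq, hsub', norm_mul, Complex.norm_of_nonneg hcpos.le]
      rw [this]
      have : ‖(z:ℂ) ^ m‖ ≤ 1 := by
        rw [norm_pow]
        exact pow_le_one₀ (norm_nonneg _) hz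
      nlinarith
    · -- membership in the oscillation set
      intro θ
      obtain ⟨y, ⟨hy1, hy2⟩, hosc⟩ := exists_osc m hm0 θ
      have hyθ : y - θ ≤ 2 * Real.pi / m := by linarith
      refine ⟨y, ⟨hy1, by linarith⟩, ?_⟩
      -- real part formula
      have key : ∀ t : ℝ, ((g (bdry t)).re : ℝ)
          = (f.1 (bdry t)).re + c * Real.cos (m * t) := by
        intro t
        have h1 : ((bdry t : ℂ)) ^ m = Complex.exp ((((m:ℝ) * t : ℝ) : ℂ) * Complex.I) := by
          show Complex.exp ((t:ℂ) * Complex.I) ^ m = _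
          rw [← Complex.exp_nat_mul]
          push_cast
          ring_nf
        show ((f.1 (bdry t)) + (c:ℂ) * ((bdry t : ℂ)) ^ m).re = _
        rw [h1, Complex.add_re, Complex.re_ofReal_mul, Complex.exp_ofReal_mul_I_re]
      rw [key y, key θ]
      -- uniform continuity bound on base difference
      have hdist : dist (bdry y) (bdry θ) < δ' := by
        have := exp_I_lip y θ
        calc dist (bdry y) (bdry θ) ≤ dist y θ := this
          _ = |y - θ| := by rw [Real.dist_eq]
          _ = y - θ := _root_.abs_of_pos (by linarith)
          _ < δ' := lt_of_le_of_lt hyθ hb1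
      have hre : |(f.1 (bdry y)).re - (f.1 (bdry θ)).re| < ε / 8 := by
        have h := hmod hdist
        calc |(f.1 (bdry y)).re - (f.1 (bdry θ)).re|
            = |(f.1 (bdry y) - f.1 (bdry θ)).re| := by rw [Complex.sub_re]
          _ ≤ ‖f.1 (bdry y) - f.1 (bdry θ)‖ := Complex.abs_re_le_norm _
          _ < ε / 8 := by rwa [Complex.dist_eq] at h
      have hcos : c * 1 ≤ c * |Real.cos (m * y) - Real.cos (m * θ)| :=
        mul_le_mul_of_nonneg_left hosc (le_of_lt hcpos)
      have habs : |y - θ| = y - θ := _root_.abs_of_pos (by linarith)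
      rw [habs]
      have h1 : (n:ℝ) * (y - θ) ≤ (n:ℝ) * (2 * Real.pi / m) :=
        mul_le_mul_of_nonneg_left hyθ (le_of_lt hn')
      have h2 : c * |Real.cos (m * y) - Real.cos (m * θ)| - |(f.1 (bdry y)).re - (f.1 (bdry θ)).re|
          ≤ |(f.1 (bdry y)).re + c * Real.cos (m * y)
              - ((f.1 (bdry θ)).re + c * Real.cos (m * θ))| := by
        have : (f.1 (bdry y)).re + c * Real.cos (m * y) - ((f.1 (bdry θ)).re + c * Real.cos (m * θ))
            = c * (Real.cos (m * y) - Real.cos (m * θ))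
              + ((f.1 (bdry y)).re - (f.1 (bdry θ)).re) := by ring
        rw [this]
        calc c * |Real.cos (m * y) - Real.cos (m * θ)| - |(f.1 (bdry y)).re - (f.1 (bdry θ)).re|
            = |c * (Real.cos (m * y) - Real.cos (m * θ))|
              - |(f.1 (bdry y)).re - (f.1 (bdry θ)).re| := by
              rw [abs_mul, _root_.abs_of_pos hcpos]
          _ ≤ _ := by
              have h := abs_add_le (c * (Real.cos (m * y) - Real.cos (m * θ)) +
                ((f.1 (bdry y)).re - (f.1 (bdry θ)).re)) (-((f.1 (bdry y)).re - (f.1 (bdry θ)).re))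
              simp only [add_neg_cancel_right, abs_neg] at h
              linarith
      have : (n:ℝ) * (y - θ) < ε / 8 := lt_of_le_of_lt h1 hb2
      have : c * 1 - ε / 8 = ε / 8 := by rw [hc]; ring
      linarith

  intro x
  rw [mem_closure_iff_nhds]
  intro N hN
  rw [mem_nhds_subtype] at hN
  obtain ⟨t, ht, hsub⟩ := hN
  rw [Metric.mem_nhds_iff] at ht
  obtain ⟨ε, hε, hball⟩ := ht
  obtain ⟨g, hg1, hg2⟩ := main x ε hε
  exact ⟨g, hsub (Set.mem_preimage.mpr (hball (Metric.mem_ball.mpr hg2))), hg1⟩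
end
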